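/- Fix h ≥ 3 an integer, let A ∈ GL(d,ℝ), and let Q(w) = Σ_{i=1}^d κ_i ((Aᵀw)_i)^h with all κ_i ≠ 0. Fix w₂ with (Aᵀw₂)_i ≠ 0 for all i. Then H := (∇²Q(w₂))^{-1} ∇²Q(w₁) = (Aᵀ)^{-1} diag(((Aᵀw₁)_i/(Aᵀw₂)_i)^{h-2}) Aᵀ for every w₁, so the columns of (A^{-1})ᵀ are eigenvectors of H with eigenvalues ((Aᵀw₁)_i/(Aᵀw₂)_i)^{h-2}. -/

import Mathlib

/-!
By the chain rule, the Hessian of `w ↦ ∑ κᵢ ((Aᵀw)ᵢ)^h` at `w` is the congruence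
`A · diag(κᵢ h (h-1) ((Aᵀw)ᵢ)^(h-2)) · Aᵀ`. In `(∇²Q(w₂))⁻¹ ∇²Q(w₁)` the factors `A` cancel and so do
the constants `κᵢ h (h-1)`, leaving `(Aᵀ)⁻¹ · diag(((Aᵀw₁)ᵢ/(Aᵀw₂)ᵢ)^(h-2)) · Aᵀ`, whose eigenvectors
are the columns of `(Aᵀ)⁻¹`.
-/

open Matrix

noncomputable def hessianMatrix {n : Type*} [Fintype n] [DecidableEq n] (f : (n → ℝ) → ℝ)
    (w : n → ℝ) : Matrix n n ℝ :=
  of fun i j => fderiv ℝ (fun x => fderiv ℝ f x (Pi.single j 1)) w (Pi.single i 1)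

section PowerSum

variable {m n : Type*} [Fintype m] [Fintype n]

theorem fderiv_sum_mul_mulVec_pow_apply (B : Matrix m n ℝ) (a : m → ℝ) (p : ℕ) (x v : n → ℝ) :
    fderiv ℝ (fun y => ∑ k, a k * (B *ᵥ y) k ^ p) x v
      = ∑ k, a k * p * (B *ᵥ x) k ^ (p - 1) * (B *ᵥ v) k := by
  let L : m → (n → ℝ) →L[ℝ] ℝ := fun k =>
    (LinearMap.proj k ∘ₗ B.mulVecLin).toContinuousLinearMap
  have hderiv : HasFDerivAt (fun y => ∑ k, a k * (B *ᵥ y) k ^ p)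
      (∑ k, a k • (p * L k x ^ (p - 1)) • L k) x :=
    HasFDerivAt.fun_sum fun k _ =>
      ((hasDerivAt_pow p (L k x)).comp_hasFDerivAt x (L k).hasFDerivAt).const_mul (a k)
  rw [hderiv.fderiv]
  simp [L, mul_assoc]

theorem hessianMatrix_sum_mul_mulVec_pow [DecidableEq m] [DecidableEq n] (B : Matrix m n ℝ)
    (a : m → ℝ) (p : ℕ) (w : n → ℝ) :
    hessianMatrix (fun y => ∑ k, a k * (B *ᵥ y) k ^ p) w
      = Bᵀ * diagonal (fun k => a k * p * (p - 1 : ℕ) * (B *ᵥ w) k ^ (p - 2)) * B := by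
  ext i j
  have hfirst : (fun x => fderiv ℝ (fun y => ∑ k, a k * (B *ᵥ y) k ^ p) x (Pi.single j 1))
      = fun x => ∑ k, (a k * p * B k j) * (B *ᵥ x) k ^ (p - 1) := by
    funext x
    rw [fderiv_sum_mul_mulVec_pow_apply]
    simp only [mulVec_single_one, col_apply]
    exact Finset.sum_congr rfl fun k _ => by ring
  rw [hessianMatrix, of_apply, hfirst, fderiv_sum_mul_mulVec_pow_apply, mul_apply]
  simp only [mulVec_single_one, col_apply, mul_diagonal, transpose_apply, Nat.sub_sub]
  exact Finset.sum_congr rfl fun k _ => by ring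

end PowerSum

theorem inv_mul_conj_diagonal {K n : Type*} [Field K] [Fintype n] [DecidableEq n]
    (Q P : Matrix n n K) (hQ : IsUnit Q.det) (u v : n → K) (hu : ∀ k, u k ≠ 0) :
    (Q * diagonal u * P)⁻¹ * (Q * diagonal v * P) = P⁻¹ * diagonal (fun k => v k / u k) * P := by
  have hdiag : (diagonal u)⁻¹ = diagonal u⁻¹ := inv_eq_left_inv <| by
    rw [diagonal_mul_diagonal, ← diagonal_one]
    exact congrArg diagonal (funext fun k => inv_mul_cancel₀ (hu k))
  rw [Matrix.mul_inv_rev, Matrix.mul_inv_rev, hdiag]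
  calc P⁻¹ * (diagonal u⁻¹ * Q⁻¹) * (Q * diagonal v * P)
      = P⁻¹ * (diagonal u⁻¹ * (Q⁻¹ * Q) * diagonal v) * P := by simp only [Matrix.mul_assoc]
    _ = _ := by
      rw [nonsing_inv_mul Q hQ, Matrix.mul_one, diagonal_mul_diagonal]
      simp only [Pi.inv_apply, inv_mul_eq_div]

theorem mulVec_col_inv_of_conj_diagonal {K n : Type*} [Field K] [Fintype n] [DecidableEq n]
    (P : Matrix n n K) (hP : IsUnit P.det) (μ : n → K) (i : n) :
    (P⁻¹ * diagonal μ * P) *ᵥ P⁻¹.col i = μ i • P⁻¹.col i := by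
  rw [← mulVec_single_one, mulVec_mulVec, Matrix.mul_assoc, Matrix.mul_assoc, mul_nonsing_inv P hP,
    Matrix.mul_one, ← mulVec_mulVec, diagonal_mulVec_single, ← mulVec_smul, ← smul_eq_mul,
    Pi.single_smul']

/-- For `h ≥ 3`, `Q(w) = ∑ i, κ i * ((Aᵀw) i)^h` with all `κ i ≠ 0`, and
`w₂` with `(Aᵀw₂) i ≠ 0` for all `i`, the matrix
`H = (∇²Q(w₂))⁻¹ ∇²Q(w₁)` equals `(Aᵀ)⁻¹ diag(((Aᵀw₁)_i/(Aᵀw₂)_i)^(h-2)) Aᵀ`,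
so the columns of `(A⁻¹)ᵀ` are eigenvectors of `H` with those eigenvalues. -/
theorem general_h_eigen_identification (d : ℕ) (h : ℕ) (hh : 3 ≤ h)
    (A : Matrix (Fin d) (Fin d) ℝ) (hA : IsUnit A.det)
    (κ : Fin d → ℝ) (hκ : ∀ i, κ i ≠ 0)
    (w₂ : Fin d → ℝ) (hw₂ : ∀ i, Aᵀ.mulVec w₂ i ≠ 0) (w₁ : Fin d → ℝ) :
    let Hess : (Fin d → ℝ) → Matrix (Fin d) (Fin d) ℝ := fun w =>
      Matrix.of fun i j =>
        fderiv ℝ (fun x : Fin d → ℝ =>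
            fderiv ℝ (fun y : Fin d → ℝ => ∑ k, κ k * (Aᵀ.mulVec y k) ^ h)
              x (Pi.single j 1)) w (Pi.single i 1)
    let H : Matrix (Fin d) (Fin d) ℝ := (Hess w₂)⁻¹ * Hess w₁
    H = (Aᵀ)⁻¹
          * Matrix.diagonal (fun i => (Aᵀ.mulVec w₁ i / Aᵀ.mulVec w₂ i) ^ (h - 2)) * Aᵀ ∧
    ∀ i : Fin d, H.mulVec (fun q => (A⁻¹)ᵀ q i)
        = ((Aᵀ.mulVec w₁ i / Aᵀ.mulVec w₂ i) ^ (h - 2)) • (fun q => (A⁻¹)ᵀ q i) := by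
  intro Hess H
  set c : Fin d → ℝ := fun k => κ k * h * (h - 1 : ℕ)
  have hc : ∀ k, c k ≠ 0 := fun k => by
    have : 1 ≤ h - 1 := by omega
    simp only [c]
    exact mul_ne_zero (mul_ne_zero (hκ k) (by positivity)) (by positivity)
  have hHess : ∀ w, Hess w = A * diagonal (fun k => c k * (Aᵀ *ᵥ w) k ^ (h - 2)) * Aᵀ := fun w =>
    (hessianMatrix_sum_mul_mulVec_pow Aᵀ κ h w).trans (by rw [transpose_transpose])
  have hconj : H = (Aᵀ)⁻¹ * diagonal (fun i => (Aᵀ *ᵥ w₁ / Aᵀ *ᵥ w₂) i ^ (h - 2)) * Aᵀ := by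
    simp only [H, hHess]
    rw [inv_mul_conj_diagonal A Aᵀ hA _ _ fun k => mul_ne_zero (hc k) (pow_ne_zero _ (hw₂ k))]
    simp only [mul_div_mul_left _ _ (hc _), Pi.div_apply, div_pow]
  refine ⟨hconj, fun i => ?_⟩
  rw [hconj, transpose_nonsing_inv]
  exact mulVec_col_inv_of_conj_diagonal Aᵀ (by rwa [det_transpose]) _ i
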